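/- For b ≥ 1, j ≥ 0, k ≥ j and n ≥ k, the identity Σ 1/(r_1!⋯r_j! · s_1!⋯s_b! · 2^{s_1+⋯+s_b}) = (j!/k!) · S_{b/2}(k+b/2, j+b/2) holds, where the sum is over all r_1,…,r_j ∈ ℕ_{≥1} and s_1,…,s_b ∈ ℕ_{≥0} with r_1+⋯+r_j+s_1+⋯+s_b = k, and S_{b/2}(k+b/2,j+b/2) := Σ_{m=j}^{k} binom(k,m) S(m,j) (b/2)^{k−m} with S the ordinary Stirling number of the second kind. -/

import Mathlib

/-!
Exponential generating functions: a sum over compositions of `k` of products of factors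
indexed by the parts is the `k`-th coefficient of a product of power series, here
`(eˣ - 1)ʲ (e^{x/2})ᵇ = (eˣ - 1)ʲ e^{bx/2}`. Since `(eˣ - 1)' = (eˣ - 1) + 1`, the numbers
`m!·[xᵐ](eˣ - 1)ʲ` satisfy the recurrence of `j!·S(m, j)`, and the binomial convolution with
`e^{bx/2}` produces the half-integer `r`-Stirling number.
-/

/-- The Stirling numbers of the second kind. -/
def stirling2 : ℕ → ℕ → ℕ
  | 0, 0 => 1
  | 0, _ + 1 => 0
  | _ + 1, 0 => 0
  | n + 1, k + 1 => (k + 1) * stirling2 n (k + 1) + stirling2 n k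

open Finset Nat PowerSeries

theorem stirling2_eq_stirlingSecond : ∀ m j, stirling2 m j = stirlingSecond m j
  | 0, 0 | 0, _ + 1 | _ + 1, 0 => rfl
  | m + 1, j + 1 => by
    rw [stirling2, stirlingSecond, stirling2_eq_stirlingSecond m, stirling2_eq_stirlingSecond m]

namespace PowerSeries

variable {R : Type*} [CommSemiring R]

theorem coeff_prod_univ_fin {c : ℕ} (F : Fin c → R⟦X⟧) (k : ℕ) :
    coeff k (∏ i, F i) = ∑ h ∈ antidiagonalTuple c k, ∏ i, coeff (h i) (F i) := by
  rw [coeff_prod, ← piAntidiag_univ_fin_eq_antidiagonalTuple, finsuppAntidiag, sum_map,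
    ← sum_attach (piAntidiag univ k)]
  rfl

theorem sum_filter_antidiagonalTuple_prod_coeff {c : ℕ} (p : Fin c → Prop) [DecidablePred p]
    (F : Fin c → R⟦X⟧) (hF : ∀ i, p i → constantCoeff (F i) = 0) (k : ℕ) :
    ∑ h ∈ (antidiagonalTuple c k).filter (fun h => ∀ i, p i → 0 < h i), ∏ i, coeff (h i) (F i) =
      coeff k (∏ i, F i) := by
  rw [coeff_prod_univ_fin]
  refine sum_filter_of_ne fun h _ hne i hi => Nat.pos_of_ne_zero fun hi0 => hne ?_
  exact prod_eq_zero (mem_univ i) (by rw [hi0, coeff_zero_eq_constantCoeff_apply, hF i hi])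

variable {A : Type*} [CommRing A] [Algebra ℚ A]

theorem rescale_exp_pow (a : A) (n : ℕ) : rescale a (exp A) ^ n = rescale (n * a) (exp A) := by
  rw [← map_pow, exp_pow_eq_rescale_exp, rescale_rescale]

theorem derivative_exp_sub_one_pow_succ (j : ℕ) :
    d⁄dX A ((exp A - 1) ^ (j + 1)) = (j + 1) * ((exp A - 1) ^ (j + 1) + (exp A - 1) ^ j) := by
  rw [Derivation.leibniz_pow, map_sub, derivative_exp, derivative_one, sub_zero]
  simp only [add_tsub_cancel_right, nsmul_eq_mul, smul_eq_mul, Nat.cast_add, Nat.cast_one]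
  ring

theorem factorial_mul_coeff_exp_sub_one_pow :
    ∀ m j : ℕ, (m ! : A) * coeff m ((exp A - 1) ^ j) = j ! * stirlingSecond m j
  | m, 0 => by cases m <;> simp [coeff_one]
  | 0, j + 1 => by simp
  | m + 1, j + 1 => by
    have h := congrArg (fun f => (m ! : A) * coeff m f) (derivative_exp_sub_one_pow_succ (A := A) j)
    have ih₁ := factorial_mul_coeff_exp_sub_one_pow m (j + 1)
    have ih₀ := factorial_mul_coeff_exp_sub_one_pow m j
    simp only [coeff_derivative] at h
    rw [show ((j : A⟦X⟧) + 1) = C ((j : A) + 1) by simp, coeff_C_mul, map_add] at h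
    rw [stirlingSecond_succ_succ]
    push_cast [factorial_succ] at ih₁ ⊢
    linear_combination h + ((j : A) + 1) * (ih₁ + ih₀)

theorem factorial_mul_coeff_exp_sub_one_pow_mul_rescale_exp (a : A) (j k : ℕ) :
    (k ! : A) * coeff k ((exp A - 1) ^ j * rescale a (exp A)) =
      j ! * ∑ m ∈ Icc j k, (k.choose m : A) * stirlingSecond m j * a ^ (k - m) := by
  have h_range : ∑ m ∈ Icc j k, (k.choose m : A) * stirlingSecond m j * a ^ (k - m) =
      ∑ m ∈ range (k + 1), (k.choose m : A) * stirlingSecond m j * a ^ (k - m) := by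
    refine sum_subset (fun m hm => by simp at hm ⊢; omega) fun m hmk hmj => ?_
    simp only [mem_range, mem_Icc, not_and] at hmk hmj
    rw [stirlingSecond_eq_zero_of_lt (by omega), Nat.cast_zero, mul_zero, zero_mul]
  rw [h_range, coeff_mul, Nat.sum_antidiagonal_eq_sum_range_succ_mk, mul_sum, mul_sum]
  refine sum_congr rfl fun m hm => ?_
  have hm : m ≤ k := Nat.lt_succ_iff.mp (mem_range.mp hm)
  have h_inv : ((k - m)! : A) * algebraMap ℚ A (1 / (k - m)!) = 1 := by
    rw [← map_natCast (algebraMap ℚ A), ← map_mul, mul_one_div_cancel (by positivity), map_one]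
  have h_stirling := factorial_mul_coeff_exp_sub_one_pow (A := A) m j
  rw [coeff_rescale, coeff_exp, ← choose_mul_factorial_mul_factorial hm]
  push_cast
  linear_combination (k.choose m * a ^ (k - m) * m ! * coeff m ((exp A - 1) ^ j) : A) * h_inv +
    (k.choose m * a ^ (k - m) : A) * h_stirling

end PowerSeries

theorem sum_compositions_eq_halfIntStirling2 (k j b : ℕ) :
    (∑ h ∈ (Finset.Nat.antidiagonalTuple (j + b) k).filter
        (fun h => ∀ i : Fin (j + b), (i : ℕ) < j → 0 < h i),
      ∏ i : Fin (j + b),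
        (if (i : ℕ) < j then ((h i).factorial : ℚ)⁻¹
          else ((h i).factorial : ℚ)⁻¹ * ((2 : ℚ) ^ h i)⁻¹)) =
      (j.factorial : ℚ) / (k.factorial : ℚ) *
        ∑ m ∈ Finset.Icc j k, (k.choose m : ℚ) * (stirling2 m j : ℚ) * ((b : ℚ) / 2) ^ (k - m) := by
  set F : Fin (j + b) → ℚ⟦X⟧ := fun i => if (i : ℕ) < j then exp ℚ - 1 else rescale 2⁻¹ (exp ℚ)
  have h_summand : ∀ h ∈ (antidiagonalTuple (j + b) k).filter
      (fun h => ∀ i : Fin (j + b), (i : ℕ) < j → 0 < h i),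
      ∏ i : Fin (j + b), (if (i : ℕ) < j then ((h i)! : ℚ)⁻¹ else ((h i)! : ℚ)⁻¹ * ((2 : ℚ) ^ h i)⁻¹)
        = ∏ i, coeff (h i) (F i) := by
    refine fun h hh => prod_congr rfl fun i _ => ?_
    simp only [F]
    split_ifs with hi
    · simp [coeff_exp, coeff_one, ((mem_filter.mp hh).2 i hi).ne']
    · simp [coeff_exp, coeff_rescale, mul_comm]
  have h_prod : ∏ i, F i = (exp ℚ - 1) ^ j * rescale ((b : ℚ) / 2) (exp ℚ) := by
    simp [F, Fin.prod_univ_add, rescale_exp_pow, div_eq_mul_inv]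
  have h_const : ∀ i : Fin (j + b), (i : ℕ) < j → constantCoeff (F i) = 0 := fun i hi => by
    simp [F, hi]
  rw [sum_congr rfl h_summand, sum_filter_antidiagonalTuple_prod_coeff _ F h_const, h_prod,
    div_mul_eq_mul_div, eq_div_iff (by positivity), mul_comm,
    factorial_mul_coeff_exp_sub_one_pow_mul_rescale_exp]
  simp only [stirling2_eq_stirlingSecond]
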